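/- arXiv:2408.09188 — 2 statements merged into one kernel-verified Lean document; each statement's English description precedes it below -/
import Mathlib

section
/- For every H ∈ (1/2, 1), the determinant D_{2,1}^*(H) := ρ_1(1 + ρ_4) − ρ_2(ρ_1 + ρ_3) is strictly positive, where ρ_k = ρ_k(H). -/
/-!
Write `a = 2H ∈ (1, 2)` and `D = (ρ₁ - ρ₂)(1 + ρ₄) + ρ₂ (1 + ρ₄ - ρ₁ - ρ₃)`.
Every `ρ_k` is positive by strict convexity of `x ↦ x ^ a`. The inequality `ρ₂ ≤ ρ₁` reads
`(3/2)^a + 3 (1/2)^a ≤ 3`, which holds because the left side is convex in `a` and equals `3` at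
`a = 1, 2`. Finally
`2 (1 + ρ₄ - ρ₁ - ρ₃) = (5^a + 3·3^a - (13/4)·4^a) + (2 - 2^a/2)²`, and the first bracket is
positive for `a < 2`: bound `(5/4)^a` and `(3/4)^a` below by their tangent lines at `a = 2`;
the slopes combine to `25 log (5/4) + 27 log (3/4) < 0`, i.e. `5^25 · 3^27 < 2^104`.
-/

open Real Set Finset

/-- Autocovariance function of fractional Gaussian noise with Hurst parameter `H`:
`ρ_k(H) = ((k+1)^{2H} − 2·k^{2H} + (k−1)^{2H})/2` for `k ≥ 1`, and `ρ_0(H) = 1`. -/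
noncomputable def rho (H : ℝ) (k : ℕ) : ℝ :=
  if k = 0 then 1
  else (((k : ℝ) + 1) ^ (2 * H) - 2 * (k : ℝ) ^ (2 * H) + ((k : ℝ) - 1) ^ (2 * H)) / 2

lemma rho_pos {H : ℝ} (hH : 1 / 2 < H) {k : ℕ} (hk : k ≠ 0) : 0 < rho H k := by
  have hk1 : (1 : ℝ) ≤ k := Nat.one_le_cast.2 (Nat.one_le_iff_ne_zero.2 hk)
  have hmid := (strictConvexOn_rpow (by linarith : 1 < 2 * H)).2
    (mem_Ici.2 (by linarith : (0 : ℝ) ≤ k - 1)) (mem_Ici.2 (by linarith : (0 : ℝ) ≤ k + 1))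
    (by linarith) (by norm_num : (0 : ℝ) < 1 / 2) (by norm_num : (0 : ℝ) < 1 / 2) (by norm_num)
  simp only [smul_eq_mul] at hmid
  rw [show 1 / 2 * ((k : ℝ) - 1) + 1 / 2 * (k + 1) = k by ring] at hmid
  rw [rho, if_neg hk]
  linarith

lemma rpow_tangent_lt {b : ℝ} (hb : 0 < b) (hb1 : b ≠ 1) {a c : ℝ} (hac : a ≠ c) :
    b ^ c * (1 + (a - c) * log b) < b ^ a := by
  have hlog : (a - c) * log b ≠ 0 :=
    mul_ne_zero (sub_ne_zero.2 hac) (log_ne_zero_of_pos_of_ne_one hb hb1)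
  calc b ^ c * (1 + (a - c) * log b) < b ^ c * exp ((a - c) * log b) := by
        gcongr
        linarith [add_one_lt_exp hlog]
    _ = b ^ a := by
        rw [rpow_def_of_pos hb, rpow_def_of_pos hb, ← exp_add]
        ring_nf

lemma three_rpow_add_three_le {a : ℝ} (h1 : 1 ≤ a) (h2 : a ≤ 2) :
    (3 : ℝ) ^ a + 3 ≤ 3 * 2 ^ a := by
  have chord : ∀ b : ℝ, 0 < b → b ^ a ≤ (2 - a) * b + (a - 1) * b ^ 2 := fun b hb => by
    have := (convexOn_rpow_left hb).2 (mem_univ 1) (mem_univ 2) (sub_nonneg.2 h2)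
      (sub_nonneg.2 h1) (by ring)
    simp only [smul_eq_mul, rpow_one, rpow_two] at this
    rwa [show (2 - a) * 1 + (a - 1) * 2 = a by ring] at this
  have h32 := chord (3 / 2) (by norm_num)
  have h12 := chord (1 / 2) (by norm_num)
  have h2pos : (0 : ℝ) < 2 ^ a := by positivity
  rw [div_rpow (by norm_num) (by norm_num)] at h32 h12
  rw [one_rpow] at h12
  rw [div_le_iff₀ h2pos] at h32 h12
  linarith

lemma thirteen_fourths_mul_four_rpow_lt {a : ℝ} (ha : a < 2) :
    13 / 4 * (4 : ℝ) ^ a < 5 ^ a + 3 * 3 ^ a := by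
  have hlog : 25 * log (5 / 4) + 27 * log (3 / 4) < 0 := by
    have h : 25 * log (5 / 4) + 27 * log (3 / 4) = log ((5 / 4) ^ 25 * (3 / 4) ^ 27) := by
      rw [log_mul (by positivity) (by positivity), log_pow, log_pow]
      push_cast
      ring
    exact h ▸ log_neg (by positivity) (by norm_num)
  have t5 := rpow_tangent_lt (b := 5 / 4) (by norm_num) (by norm_num) ha.ne
  have t3 := rpow_tangent_lt (b := 3 / 4) (by norm_num) (by norm_num) ha.ne
  have h4pos : (0 : ℝ) < 4 ^ a := by positivity
  rw [div_rpow (by norm_num) (by norm_num), rpow_two] at t5 t3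
  rw [div_rpow (by norm_num) (by norm_num), lt_div_iff₀ h4pos] at t5 t3
  linarith [mul_neg_of_pos_of_neg (mul_pos h4pos (sub_pos.2 ha)) hlog]

lemma rho_two_le_rho_one {H : ℝ} (h1 : 1 / 2 ≤ H) (h2 : H ≤ 1) : rho H 2 ≤ rho H 1 := by
  have := three_rpow_add_three_le (a := 2 * H) (by linarith) (by linarith)
  norm_num [rho, zero_rpow (by linarith : 2 * H ≠ 0)]
  linarith

lemma rho_one_add_rho_three_lt {H : ℝ} (h0 : 0 < H) (h1 : H < 1) :
    rho H 1 + rho H 3 < 1 + rho H 4 := by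
  have hlt := thirteen_fourths_mul_four_rpow_lt (a := 2 * H) (by linarith)
  have hsq : (4 : ℝ) ^ (2 * H) = 2 ^ (2 * H) * 2 ^ (2 * H) := by
    rw [← mul_rpow (by norm_num) (by norm_num)]
    norm_num
  norm_num [rho, zero_rpow (by linarith : 2 * H ≠ 0)]
  linarith [sq_nonneg (2 - (2 : ℝ) ^ (2 * H) / 2)]

theorem stmt_8 (H : ℝ) (hH : H ∈ Ioo (1 / 2 : ℝ) 1) :
    0 < rho H 1 * (1 + rho H 4) - rho H 2 * (rho H 1 + rho H 3) := by
  obtain ⟨h1, h2⟩ := hH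
  have hρ2 : 0 < rho H 2 := rho_pos h1 two_ne_zero
  have hρ4 : 0 < rho H 4 := rho_pos h1 four_ne_zero
  have hρ12 := rho_two_le_rho_one h1.le h2.le
  have hsum := rho_one_add_rho_three_lt (by linarith) h2
  calc 0 < rho H 2 * (1 + rho H 4 - rho H 1 - rho H 3) := mul_pos hρ2 (by linarith)
    _ ≤ (rho H 1 - rho H 2) * (1 + rho H 4) + rho H 2 * (1 + rho H 4 - rho H 1 - rho H 3) :=
      le_add_of_nonneg_left (mul_nonneg (by linarith) (by linarith))
    _ = rho H 1 * (1 + rho H 4) - rho H 2 * (rho H 1 + rho H 3) := by ring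
end

section
/- For every H ∈ (1/2, 1), the determinant D_{2,2}^*(H) := ρ_2(1 + ρ_2) − ρ_1(ρ_1 + ρ_3) is strictly positive, where ρ_k = ρ_k(H). -/
open Real Set Finset
open Topology Filter

/-! With `s = 2H`, `4 D = G(s) := 9^s - 8^s - 2·6^s + 4·4^s - 2·2^s - 1`, which vanishes at
`s = 1` and `s = 2`. Rolle's theorem gives a rule of signs for exponential sums `∑ cᵢ bᵢ^s`:
multiplying by `t^(-s)` and differentiating replaces `cᵢ` by `cᵢ log (bᵢ / t)`, and between two
zeros of the old sum lies a zero of the new one. For `t = 3, 5, 17/2` in turn, the product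
`cᵢ log (bᵢ/3) log (bᵢ/5) log (2bᵢ/17)` is positive for every `i`, so the derivative of
`G(s) 3^(-s)` has at most two zeros. As `G(s) 3^(-s)` increases at `s = 1` and decreases at
`s = 2`, a point of `(1, 2)` where `G ≤ 0` would give it three critical points. -/

section Critical

variable {f f' : ℝ → ℝ}

lemma exists_pos_right_of_hasDerivAt_pos {a b : ℝ} (hf : HasDerivAt f (f' a) a) (ha : f a = 0)
    (ha' : 0 < f' a) (hab : a < b) : ∃ u ∈ Ioo a b, 0 < f u := by
  have hslope : ∀ᶠ x in 𝓝[>] a, 0 < slope f a x :=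
    ((hasDerivAt_iff_tendsto_slope.mp hf).mono_left (nhdsGT_le_nhdsNE a)).eventually
      (lt_mem_nhds ha')
  obtain ⟨u, hu, hua⟩ := (hslope.and (Ioo_mem_nhdsGT hab)).exists
  rw [slope_def_field, ha, sub_zero] at hu
  exact ⟨u, hua, (div_pos_iff_of_pos_right (sub_pos.mpr hua.1)).mp hu⟩

lemma exists_pos_left_of_hasDerivAt_neg {a b : ℝ} (hf : HasDerivAt f (f' b) b) (hb : f b = 0)
    (hb' : f' b < 0) (hab : a < b) : ∃ v ∈ Ioo a b, 0 < f v := by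
  have hslope : ∀ᶠ x in 𝓝[<] b, slope f b x < 0 :=
    ((hasDerivAt_iff_tendsto_slope.mp hf).mono_left (nhdsLT_le_nhdsNE b)).eventually
      (gt_mem_nhds hb')
  obtain ⟨v, hv, hvb⟩ := (hslope.and (Ioo_mem_nhdsLT hab)).exists
  rw [slope_def_field, hb, sub_zero] at hv
  exact ⟨v, hvb,
    lt_of_not_ge fun h ↦ hv.not_ge (div_nonneg_of_nonpos h (sub_neg.mpr hvb.2).le)⟩

lemma exists_hasDerivAt_eq_zero_of_lt (hf : ∀ x, HasDerivAt f (f' x) x) {a b t : ℝ}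
    (ht : t ∈ Icc a b) (hat : f a < f t) (hbt : f b < f t) :
    ∃ p ∈ Ioo a b, f' p = 0 ∧ f t ≤ f p := by
  have hcont : ContinuousOn f (Icc a b) := fun x _ ↦ (hf x).continuousAt.continuousWithinAt
  obtain ⟨p, hp, hmax⟩ := isCompact_Icc.exists_isMaxOn ⟨t, ht⟩ hcont
  have htp : f t ≤ f p := hmax ht
  have hpa : p ≠ a := by rintro rfl; linarith
  have hpb : p ≠ b := by rintro rfl; linarith
  have hpI : p ∈ Ioo a b := ⟨hp.1.lt_of_ne' hpa, hp.2.lt_of_ne hpb⟩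
  exact ⟨p, hpI, (hmax.isLocalMax (Icc_mem_nhds hpI.1 hpI.2)).hasDerivAt_eq_zero (hf p), htp⟩

lemma exists_three_hasDerivAt_eq_zero (hf : ∀ x, HasDerivAt f (f' x) x) {a b s : ℝ}
    (has : a < s) (hsb : s < b) (ha : f a = 0) (hb : f b = 0) (ha' : 0 < f' a) (hb' : f' b < 0)
    (hs : f s ≤ 0) : ∃ p q r, p < q ∧ q < r ∧ f' p = 0 ∧ f' q = 0 ∧ f' r = 0 := by
  obtain ⟨u, hu, hfu⟩ := exists_pos_right_of_hasDerivAt_pos (hf a) ha ha' has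
  obtain ⟨v, hv, hfv⟩ := exists_pos_left_of_hasDerivAt_neg (hf b) hb hb' hsb
  obtain ⟨p, hp, hf'p, hfp⟩ :=
    exists_hasDerivAt_eq_zero_of_lt hf (Ioo_subset_Icc_self hu) (by linarith) (by linarith)
  obtain ⟨r, hr, hf'r, hfr⟩ :=
    exists_hasDerivAt_eq_zero_of_lt hf (Ioo_subset_Icc_self hv) (by linarith) (by linarith)
  obtain ⟨q, hq, hf'q, -⟩ := exists_hasDerivAt_eq_zero_of_lt (fun x ↦ (hf x).neg)
    (t := s) ⟨hp.2.le, hr.1.le⟩ (neg_lt_neg (by linarith)) (neg_lt_neg (by linarith))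
  exact ⟨p, q, r, hq.1, hq.2, hf'p, neg_eq_zero.mp hf'q, hf'r⟩

end Critical

section ExpSum

variable {ι : Type*} [Fintype ι] {c b : ι → ℝ}

noncomputable def expSum (c b : ι → ℝ) (s : ℝ) : ℝ := ∑ i, c i * b i ^ s

lemma expSum_mul_rpow (hb : ∀ i, 0 ≤ b i) {t : ℝ} (ht : 0 ≤ t) (s : ℝ) :
    expSum c b s * t ^ s = expSum c (fun i ↦ b i * t) s := by
  simp only [expSum, Finset.sum_mul, mul_rpow (hb _) ht, mul_assoc]

lemma hasDerivAt_expSum (hb : ∀ i, 0 < b i) (s : ℝ) :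
    HasDerivAt (expSum c b) (expSum (fun i ↦ c i * log (b i)) b s) s := by
  refine (HasDerivAt.fun_sum (u := univ) fun i _ ↦
    (hasStrictDerivAt_const_rpow (hb i) s).hasDerivAt.const_mul (c i)).congr_deriv ?_
  exact Finset.sum_congr rfl fun i _ ↦ by ring

lemma expSum_pos [Nonempty ι] (hc : ∀ i, 0 < c i) (hb : ∀ i, 0 < b i) (s : ℝ) :
    0 < expSum c b s :=
  Finset.sum_pos (fun i _ ↦ mul_pos (hc i) (rpow_pos_of_pos (hb i) s)) univ_nonempty

lemma exists_expSum_log_eq_zero (hb : ∀ i, 0 < b i) {t : ℝ} (ht : 0 < t) {x y : ℝ}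
    (hxy : x < y) (hx : expSum c b x = 0) (hy : expSum c b y = 0) :
    ∃ z ∈ Ioo x y,
      expSum (fun i ↦ c i * log (b i * t)) (fun i ↦ b i * t) z = 0 := by
  have hbt : ∀ i, 0 < b i * t := fun i ↦ mul_pos (hb i) ht
  have hzero : ∀ s, expSum c b s = 0 → expSum c (fun i ↦ b i * t) s = 0 := fun s hs ↦ by
    rw [← expSum_mul_rpow (fun i ↦ (hb i).le) ht.le, hs, zero_mul]
  exact exists_hasDerivAt_eq_zero hxy
    (fun s _ ↦ (hasDerivAt_expSum hbt s).continuousAt.continuousWithinAt)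
    ((hzero x hx).trans (hzero y hy).symm) (fun s _ ↦ hasDerivAt_expSum hbt s)

end ExpSum

lemma log_mul_sub_one_pos {x : ℝ} (hx : 0 < x) (hx1 : x ≠ 1) : 0 < log x * (x - 1) := by
  rcases hx1.lt_or_gt with h | h
  · exact mul_pos_of_neg_of_neg (log_neg hx h) (sub_neg.mpr h)
  · exact mul_pos (log_pos h) (sub_pos.mpr h)

lemma mul_log_mul_log_mul_log_pos {c x y z : ℝ} (hx : 0 < x) (hy : 0 < y) (hz : 0 < z)
    (h : 0 < c * ((x - 1) * (y - 1) * (z - 1))) : 0 < c * log x * log y * log z := by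
  obtain ⟨hc, hx1, hy1, hz1⟩ : c ≠ 0 ∧ x ≠ 1 ∧ y ≠ 1 ∧ z ≠ 1 := by
    refine ⟨?_, ?_, ?_, ?_⟩ <;> rintro rfl <;> simp at h
  have hprod : 0 < c * log x * log y * log z * (c * ((x - 1) * (y - 1) * (z - 1))) := by
    rw [show c * log x * log y * log z * (c * ((x - 1) * (y - 1) * (z - 1))) =
      c ^ 2 * (log x * (x - 1)) * (log y * (y - 1)) * (log z * (z - 1)) by ring]
    exact mul_pos (mul_pos (mul_pos (sq_pos_of_ne_zero hc)
      (log_mul_sub_one_pos hx hx1)) (log_mul_sub_one_pos hy hy1)) (log_mul_sub_one_pos hz hz1)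
  exact pos_of_mul_pos_left hprod h.le

def detCoeff : Fin 6 → ℝ := ![1, -1, -2, 4, -2, -1]

def detBase : Fin 6 → ℝ := ![9, 8, 6, 4, 2, 1]

lemma expSum_det_eq (s : ℝ) : expSum detCoeff detBase s =
    (3 ^ s) ^ 2 - (2 ^ s) ^ 3 - 2 * (2 ^ s * 3 ^ s) + 4 * (2 ^ s) ^ 2 - 2 * 2 ^ s - 1 := by
  have e9 : (9 : ℝ) ^ s = (3 ^ s) ^ 2 := by
    rw [sq, ← mul_rpow (by norm_num) (by norm_num)]; norm_num
  have e8 : (8 : ℝ) ^ s = (2 ^ s) ^ 3 := by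
    rw [pow_succ, sq, ← mul_rpow (by norm_num) (by norm_num),
      ← mul_rpow (by norm_num) (by norm_num)]
    norm_num
  have e6 : (6 : ℝ) ^ s = 2 ^ s * 3 ^ s := by
    rw [← mul_rpow (by norm_num) (by norm_num)]; norm_num
  have e4 : (4 : ℝ) ^ s = (2 ^ s) ^ 2 := by
    rw [sq, ← mul_rpow (by norm_num) (by norm_num)]; norm_num
  simp only [expSum, Fin.sum_univ_six, detCoeff, detBase, Matrix.cons_val, one_rpow,
    e9, e8, e6, e4]
  ring

lemma four_mul_det_eq_expSum {H : ℝ} (hH : 0 < H) :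
    4 * (rho H 2 * (1 + rho H 2) - rho H 1 * (rho H 1 + rho H 3)) =
      expSum detCoeff detBase (2 * H) := by
  have h4 : (4 : ℝ) ^ (2 * H) = (2 ^ (2 * H)) ^ 2 := by
    rw [sq, ← mul_rpow (by norm_num) (by norm_num)]; norm_num
  simp only [rho, expSum_det_eq]
  norm_num [zero_rpow (by positivity : 2 * H ≠ 0), h4]
  ring

lemma expSum_det_one : expSum detCoeff detBase 1 = 0 := by
  norm_num [expSum_det_eq]

lemma expSum_det_two : expSum detCoeff detBase 2 = 0 := by
  norm_num [expSum_det_eq]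

lemma log_four : log 4 = 2 * log 2 := by
  rw [show (4 : ℝ) = 2 ^ 2 by norm_num, log_pow]; norm_num

lemma log_eight : log 8 = 3 * log 2 := by
  rw [show (8 : ℝ) = 2 ^ 3 by norm_num, log_pow]; norm_num

lemma log_div_three {x : ℝ} (hx : x ≠ 0) : log (x / 3) = log x - log 3 :=
  log_div hx three_ne_zero

lemma mul_log_lt_mul_log_of_pow_lt {x y : ℝ} {m n : ℕ} (hx : 0 < x) (h : x ^ m < y ^ n) :
    m * log x < n * log y := by
  rw [← log_pow, ← log_pow]; exact log_lt_log (pow_pos hx m) h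

lemma detBase_pos (i : Fin 6) : 0 < detBase i := by
  fin_cases i <;> norm_num [detBase]

lemma expSum_log_detBase_div_three_one_pos :
    0 < expSum (fun i ↦ detCoeff i * log (detBase i * (1 / 3)))
      (fun i ↦ detBase i * (1 / 3)) 1 := by
  have := mul_log_lt_mul_log_of_pow_lt (m := 8) (n := 6) two_pos (y := 3) (by norm_num)
  push_cast at this
  simp only [expSum, Fin.sum_univ_six, detCoeff, detBase, Matrix.cons_val]
  norm_num [log_div_three, log_four, log_eight]
  linarith

lemma expSum_log_detBase_div_three_two_neg :
    expSum (fun i ↦ detCoeff i * log (detBase i * (1 / 3)))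
      (fun i ↦ detBase i * (1 / 3)) 2 < 0 := by
  have := mul_log_lt_mul_log_of_pow_lt (m := 10) (n := 16) three_pos (y := 2) (by norm_num)
  push_cast at this
  simp only [expSum, Fin.sum_univ_six, detCoeff, detBase, Matrix.cons_val]
  norm_num [log_div_three, log_four, log_eight]
  linarith

lemma expSum_det_pos {s : ℝ} (hs : s ∈ Set.Ioo 1 2) : 0 < expSum detCoeff detBase s := by
  by_contra! hs_nonpos
  set b : Fin 6 → ℝ := fun i ↦ detBase i * (1 / 3) with hb_def
  have hb : ∀ i, 0 < b i := fun i ↦ mul_pos (detBase_pos i) (by norm_num)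
  have hrescale : ∀ x, expSum detCoeff b x = expSum detCoeff detBase x * (1 / 3) ^ x :=
    fun x ↦ (expSum_mul_rpow (fun i ↦ (detBase_pos i).le) (by norm_num) x).symm
  obtain ⟨p, q, r, hpq, hqr, hp, hq, hr⟩ := exists_three_hasDerivAt_eq_zero
    (hasDerivAt_expSum hb) hs.1 hs.2
    (by rw [hrescale, expSum_det_one, zero_mul]) (by rw [hrescale, expSum_det_two, zero_mul])
    expSum_log_detBase_div_three_one_pos expSum_log_detBase_div_three_two_neg
    (by rw [hrescale]; exact mul_nonpos_of_nonpos_of_nonneg hs_nonpos (by positivity))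
  obtain ⟨p', hp', hp'0⟩ := exists_expSum_log_eq_zero hb (t := 3 / 5) (by norm_num) hpq hp hq
  obtain ⟨q', hq', hq'0⟩ := exists_expSum_log_eq_zero hb (t := 3 / 5) (by norm_num) hqr hq hr
  obtain ⟨r', -, hr'0⟩ := exists_expSum_log_eq_zero (fun i ↦ mul_pos (hb i) (by norm_num))
    (t := 10 / 17) (by norm_num) (hp'.2.trans hq'.1) hp'0 hq'0
  refine (expSum_pos (fun i ↦ ?_) (fun i ↦ mul_pos (mul_pos (hb i) (by norm_num)) (by norm_num))
    r').ne' hr'0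
  refine mul_log_mul_log_mul_log_pos (hb i) (mul_pos (hb i) (by norm_num))
    (mul_pos (mul_pos (hb i) (by norm_num)) (by norm_num)) ?_
  fin_cases i <;> norm_num [hb_def, detCoeff, detBase]

theorem stmt_9 (H : ℝ) (hH : H ∈ Ioo (1 / 2 : ℝ) 1) :
    0 < rho H 2 * (1 + rho H 2) - rho H 1 * (rho H 1 + rho H 3) := by
  have hdet := four_mul_det_eq_expSum (H := H) (by linarith [hH.1])
  have hpos := expSum_det_pos (s := 2 * H) ⟨by linarith [hH.1], by linarith [hH.2]⟩
  linarith
end
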